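/- Suppose r ≥ 1 and a_1,…,a_r ∈ ℤ^n form a ℤ-basis of the exponent lattice U_λ, i.e., U_λ = ℤ·a_1 ⊕ ℤ·a_2 ⊕ ⋯ ⊕ ℤ·a_r. Then the constant field Const_σ K = {f ∈ K | σ(f) = f} equals F(α^{a_1}, α^{a_2}, …, α^{a_r}), the subfield of K generated by F together with the Laurent monomials α^{a_1},…,α^{a_r}. -/

import Mathlib

open MvPolynomial

/-- `K F n` is the rational function field `F(α₁,…,αₙ)`. -/
abbrev K (F : Type*) [Field F] (n : ℕ) := FractionRing (MvPolynomial (Fin n) F)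

/-- The canonical image of the variable `αᵢ` in `K F n`. -/
noncomputable def α {F : Type*} [Field F] {n : ℕ} (i : Fin n) : K F n :=
  algebraMap (MvPolynomial (Fin n) F) (K F n) (X i)

/-- The Laurent monomial `α^a = α₁^{a₁}⋯αₙ^{aₙ} ∈ K` for an integer multi-index `a ∈ ℤⁿ`. -/
noncomputable def laurentMonomial {F : Type*} [Field F] {n : ℕ} (a : Fin n → ℤ) : K F n :=
  ∏ t, (α t : K F n) ^ a t

/-!
Write a constant `f = p / q` in lowest terms. On polynomials `σ` acts by `scaleVars λ`, which
multiplies the coefficient of `α^e` by `λ^e`; so `σ f = f` gives `σp · q = p · σq`, hence `p ∣ σp`.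
Since `σ` preserves supports it preserves total degree, so `σp = c·p` and then `σq = c·q`: every
monomial `α^e` of `p` and of `q` has the same weight `λ^e = c`. Dividing `p` and `q` by one
monomial `α^{e₀}` of `q` writes `f` as a quotient of `F`-combinations of the `α^{e - e₀}`, whose
exponents lie in `U_λ = ℤa₁ ⊕ ⋯ ⊕ ℤa_r`.
-/

namespace MvPolynomial

variable {ι R : Type*} [CommRing R]

noncomputable def scaleVars (lam : ι → R) : MvPolynomial ι R →ₐ[R] MvPolynomial ι R :=
  aeval fun i => C (lam i) * X i

theorem scaleVars_monomial [Fintype ι] (lam : ι → R) (e : ι →₀ ℕ) (c : R) :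
    scaleVars lam (monomial e c) = monomial e ((∏ i, lam i ^ e i) * c) := by
  rw [scaleVars, aeval_monomial, monomial_eq, Finsupp.prod_pow, Finsupp.prod_pow]
  simp only [mul_pow, Finset.prod_mul_distrib, algebraMap_eq, C_mul, map_prod, C_pow]
  ring

theorem coeff_scaleVars [Fintype ι] (lam : ι → R) (p : MvPolynomial ι R) (e : ι →₀ ℕ) :
    coeff e (scaleVars lam p) = (∏ i, lam i ^ e i) * coeff e p := by
  classical
  induction p using MvPolynomial.induction_on' with
  | monomial d c =>
    rw [scaleVars_monomial, coeff_monomial, coeff_monomial]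
    split_ifs with h
    · rw [h]
    · rw [mul_zero]
  | add p q hp hq => rw [map_add, coeff_add, coeff_add, hp, hq, mul_add]

variable [IsDomain R]

theorem support_scaleVars [Fintype ι] {lam : ι → R} (hlam : ∀ i, lam i ≠ 0)
    (p : MvPolynomial ι R) : (scaleVars lam p).support = p.support := by
  ext e
  simp [coeff_scaleVars, Finset.prod_ne_zero_iff, hlam]

theorem totalDegree_scaleVars [Fintype ι] {lam : ι → R} (hlam : ∀ i, lam i ≠ 0)
    (p : MvPolynomial ι R) : (scaleVars lam p).totalDegree = p.totalDegree := by
  rw [totalDegree, totalDegree, support_scaleVars hlam]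

theorem exists_eq_C_mul_of_dvd_of_totalDegree_le {p q : MvPolynomial ι R} (hq : q ≠ 0)
    (hpq : p ∣ q) (hdeg : q.totalDegree ≤ p.totalDegree) : ∃ c, q = C c * p := by
  obtain ⟨w, rfl⟩ := hpq
  have hp : p ≠ 0 := left_ne_zero_of_mul hq
  rw [totalDegree_mul_of_isDomain hp (right_ne_zero_of_mul hq)] at hdeg
  have hw : w.totalDegree = 0 := by omega
  exact ⟨w.coeff 0, by rw [mul_comm, ← totalDegree_eq_zero_iff_eq_C.mp hw]⟩

theorem prod_pow_eq_of_scaleVars_eq_C_mul [Fintype ι] {lam : ι → R} {p : MvPolynomial ι R}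
    {c : R} (h : scaleVars lam p = C c * p) {e : ι →₀ ℕ} (he : e ∈ p.support) :
    ∏ i, lam i ^ e i = c := by
  have := congrArg (coeff e) h
  rw [coeff_scaleVars, coeff_C_mul] at this
  exact mul_right_cancel₀ (mem_support_iff.mp he) this

end MvPolynomial

section LambdaPow

variable {ι G : Type*} [Fintype ι] [CommGroupWithZero G]

def lambdaPow (lam : ι → G) (b : ι → ℤ) : G :=
  ∏ t, lam t ^ b t

theorem lambdaPow_ne_zero {lam : ι → G} (hlam : ∀ i, lam i ≠ 0) (b : ι → ℤ) :
    lambdaPow lam b ≠ 0 :=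
  Finset.prod_ne_zero_iff.mpr fun t _ => zpow_ne_zero _ (hlam t)

theorem lambdaPow_sub {lam : ι → G} (hlam : ∀ i, lam i ≠ 0) (b c : ι → ℤ) :
    lambdaPow lam (b - c) = lambdaPow lam b / lambdaPow lam c := by
  simp only [lambdaPow, Pi.sub_apply, zpow_sub₀ (hlam _), Finset.prod_div_distrib]

theorem lambdaPow_natCast (lam : ι → G) (e : ι →₀ ℕ) :
    lambdaPow lam (fun t => (e t : ℤ)) = ∏ t, lam t ^ e t := by
  simp only [lambdaPow, zpow_natCast]

end LambdaPow

section RationalFunctionField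

variable {F : Type*} [Field F] {n : ℕ}

theorem α_ne_zero (t : Fin n) : (α t : K F n) ≠ 0 :=
  (map_ne_zero_iff _ (IsFractionRing.injective _ _)).mpr (X_ne_zero t)

theorem laurentMonomial_zero : laurentMonomial (0 : Fin n → ℤ) = (1 : K F n) := by
  simp [laurentMonomial]

theorem laurentMonomial_add (b c : Fin n → ℤ) :
    (laurentMonomial (b + c) : K F n) = laurentMonomial b * laurentMonomial c := by
  rw [laurentMonomial, laurentMonomial, laurentMonomial, ← Finset.prod_mul_distrib]
  exact Finset.prod_congr rfl fun t _ => zpow_add₀ (α_ne_zero t) _ _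

theorem laurentMonomial_sub (b c : Fin n → ℤ) :
    (laurentMonomial (b - c) : K F n) = laurentMonomial b / laurentMonomial c := by
  rw [laurentMonomial, laurentMonomial, laurentMonomial, ← Finset.prod_div_distrib]
  exact Finset.prod_congr rfl fun t _ => zpow_sub₀ (α_ne_zero t) _ _

theorem laurentMonomial_zsmul (k : ℤ) (b : Fin n → ℤ) :
    (laurentMonomial (k • b) : K F n) = laurentMonomial b ^ k := by
  simp only [laurentMonomial, Pi.smul_apply, smul_eq_mul, mul_comm k, zpow_mul, Finset.prod_zpow]

theorem laurentMonomial_ne_zero (b : Fin n → ℤ) : (laurentMonomial b : K F n) ≠ 0 :=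
  Finset.prod_ne_zero_iff.mpr fun t _ => zpow_ne_zero _ (α_ne_zero t)

theorem algebraMap_monomial_eq (e : Fin n →₀ ℕ) (c : F) :
    algebraMap (MvPolynomial (Fin n) F) (K F n) (monomial e c)
      = algebraMap F (K F n) c * laurentMonomial (fun t => (e t : ℤ)) := by
  rw [monomial_eq, Finsupp.prod_pow, map_mul, map_prod, ← algebraMap_eq,
    ← IsScalarTower.algebraMap_apply]
  simp only [map_pow, zpow_natCast, laurentMonomial, α]

theorem algebraMap_eq_sum_laurentMonomial (p : MvPolynomial (Fin n) F) :
    algebraMap (MvPolynomial (Fin n) F) (K F n) p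
      = ∑ e ∈ p.support,
          algebraMap F (K F n) (coeff e p) * laurentMonomial (fun t => (e t : ℤ)) := by
  conv_lhs => rw [p.as_sum]
  simp only [map_sum, algebraMap_monomial_eq]

variable {lam : Fin n → F} {σ : K F n ≃ₐ[F] K F n}

theorem ne_zero_of_map_α_eq_mul (hσ : ∀ i, σ (α i) = algebraMap F (K F n) (lam i) * α i)
    (i : Fin n) : lam i ≠ 0 := by
  rintro h
  apply α_ne_zero (F := F) i
  simpa [h] using hσ i

theorem map_laurentMonomial (hσ : ∀ i, σ (α i) = algebraMap F (K F n) (lam i) * α i)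
    (b : Fin n → ℤ) :
    σ (laurentMonomial b) = algebraMap F (K F n) (lambdaPow lam b) * laurentMonomial b := by
  simp only [laurentMonomial, lambdaPow, map_prod, map_zpow₀, hσ, mul_zpow,
    Finset.prod_mul_distrib]

theorem map_algebraMap_eq_scaleVars (hσ : ∀ i, σ (α i) = algebraMap F (K F n) (lam i) * α i)
    (p : MvPolynomial (Fin n) F) :
    σ (algebraMap (MvPolynomial (Fin n) F) (K F n) p)
      = algebraMap (MvPolynomial (Fin n) F) (K F n) (scaleVars lam p) := by
  have : (σ : K F n →ₐ[F] K F n).comp (IsScalarTower.toAlgHom F _ _)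
      = (IsScalarTower.toAlgHom F (MvPolynomial (Fin n) F) (K F n)).comp (scaleVars lam) := by
    refine algHom_ext fun i => ?_
    change σ (α i) = algebraMap _ _ (scaleVars lam (X i))
    rw [hσ, scaleVars, aeval_X, map_mul, ← algebraMap_eq, ← IsScalarTower.algebraMap_apply]
    rfl
  exact DFunLike.congr_fun this p

end RationalFunctionField

section ConstantField

variable {F : Type*} [Field F] {n : ℕ}

theorem closure_image_laurentMonomial_eq {U : Set (Fin n → ℤ)} {r : ℕ} {a : Fin r → Fin n → ℤ}
    (hU : ∀ b, b ∈ U ↔ ∃ s : Fin r → ℤ, b = ∑ j, s j • a j) :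
    Subfield.closure (Set.range (algebraMap F (K F n)) ∪ laurentMonomial '' U)
      = Subfield.closure (Set.range (algebraMap F (K F n)) ∪
          Set.range fun j => laurentMonomial (a j)) := by
  apply le_antisymm <;> refine Subfield.closure_le.mpr ?_
  · rintro _ (⟨c, rfl⟩ | ⟨b, hb, rfl⟩)
    · exact Subfield.subset_closure (.inl ⟨c, rfl⟩)
    obtain ⟨s, rfl⟩ := (hU b).mp hb
    refine Finset.sum_induction _ (fun b => laurentMonomial b ∈ Subfield.closure _)
      (fun b c hb hc => ?_) ?_ fun j _ => ?_
    · rw [laurentMonomial_add]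
      exact mul_mem hb hc
    · rw [laurentMonomial_zero]
      exact one_mem _
    · rw [laurentMonomial_zsmul]
      exact zpow_mem (Subfield.subset_closure (.inr ⟨j, rfl⟩)) _
  · rintro _ (⟨c, rfl⟩ | ⟨j, rfl⟩)
    · exact Subfield.subset_closure (.inl ⟨c, rfl⟩)
    · refine Subfield.subset_closure (.inr ⟨a j, (hU _).mpr ⟨Pi.single j 1, ?_⟩, rfl⟩)
      simp [Pi.single_apply]

noncomputable def expLatticeSubfield (lam : Fin n → F) : Subfield (K F n) :=
  Subfield.closure
    (Set.range (algebraMap F (K F n)) ∪ laurentMonomial '' {b | lambdaPow lam b = 1})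

variable {lam : Fin n → F} {σ : K F n ≃ₐ[F] K F n}

theorem algebraMap_div_laurentMonomial_mem (hlam : ∀ i, lam i ≠ 0)
    {p : MvPolynomial (Fin n) F} {e₀ : Fin n →₀ ℕ}
    (hp : ∀ e ∈ p.support, ∏ t, lam t ^ e t = ∏ t, lam t ^ e₀ t) :
    algebraMap _ (K F n) p / laurentMonomial (fun t => (e₀ t : ℤ)) ∈ expLatticeSubfield lam := by
  rw [algebraMap_eq_sum_laurentMonomial, Finset.sum_div]
  refine sum_mem fun e he => ?_
  rw [mul_div_assoc, ← laurentMonomial_sub]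
  refine mul_mem (Subfield.subset_closure (.inl ⟨_, rfl⟩))
    (Subfield.subset_closure (.inr ⟨_, ?_, rfl⟩))
  change lambdaPow lam _ = 1
  rw [lambdaPow_sub hlam, div_eq_one_iff_eq (lambdaPow_ne_zero hlam _),
    lambdaPow_natCast, lambdaPow_natCast, hp e he]

theorem scaleVars_num_mul_den (hσ : ∀ i, σ (α i) = algebraMap F (K F n) (lam i) * α i)
    {f : K F n} (hf : σ f = f) :
    scaleVars lam (IsFractionRing.num _ f) * ↑(IsFractionRing.den (MvPolynomial (Fin n) F) f)
      = IsFractionRing.num _ f *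
          scaleVars lam ↑(IsFractionRing.den (MvPolynomial (Fin n) F) f) := by
  apply IsFractionRing.injective (MvPolynomial (Fin n) F) (K F n)
  have hnum := (IsFractionRing.num_mul_den_eq_num_iff_eq (A := MvPolynomial (Fin n) F)).mpr
    (rfl : f = f)
  rw [map_mul, map_mul, ← map_algebraMap_eq_scaleVars hσ, ← map_algebraMap_eq_scaleVars hσ,
    ← hnum, map_mul, hf]
  ring

theorem mem_expLatticeSubfield_of_fixed (hσ : ∀ i, σ (α i) = algebraMap F (K F n) (lam i) * α i)
    {f : K F n} (hf : σ f = f) : f ∈ expLatticeSubfield lam := by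
  obtain rfl | hf0 := eq_or_ne f 0
  · exact zero_mem _
  have hlam := ne_zero_of_map_α_eq_mul hσ
  set p := IsFractionRing.num (MvPolynomial (Fin n) F) f
  set q := (IsFractionRing.den (MvPolynomial (Fin n) F) f : MvPolynomial (Fin n) F)
  have hp : p ≠ 0 := mt (IsFractionRing.num_eq_zero f).mp hf0
  have hq : q ≠ 0 := nonZeroDivisors.coe_ne_zero _
  have hcross : scaleVars lam p * q = p * scaleVars lam q := scaleVars_num_mul_den hσ hf
  have hσp : scaleVars lam p ≠ 0 := by
    rwa [Ne, ← support_eq_empty, support_scaleVars hlam, support_eq_empty]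
  obtain ⟨c, hpc⟩ := exists_eq_C_mul_of_dvd_of_totalDegree_le hσp
    ((IsFractionRing.num_den_reduced _ f).dvd_of_dvd_mul_right ⟨_, hcross⟩)
    (totalDegree_scaleVars hlam p).le
  have hqc : scaleVars lam q = C c * q := mul_left_cancel₀ hp (by rw [← hcross, hpc]; ring)
  obtain ⟨e₀, he₀⟩ := support_nonempty.mpr hq
  have hweight {x} (hx : scaleVars lam x = C c * x) (e) (he : e ∈ x.support) :
      ∏ t, lam t ^ e t = ∏ t, lam t ^ e₀ t :=
    (prod_pow_eq_of_scaleVars_eq_C_mul hx he).trans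
      (prod_pow_eq_of_scaleVars_eq_C_mul hqc he₀).symm
  rw [← IsFractionRing.mk'_num_den' (MvPolynomial (Fin n) F) f,
    ← div_div_div_cancel_right₀ (laurentMonomial_ne_zero fun t => (e₀ t : ℤ))]
  exact div_mem (algebraMap_div_laurentMonomial_mem hlam (hweight hpc))
    (algebraMap_div_laurentMonomial_mem hlam (hweight hqc))

theorem fixed_of_mem_expLatticeSubfield (hσ : ∀ i, σ (α i) = algebraMap F (K F n) (lam i) * α i)
    {f : K F n} (hf : f ∈ expLatticeSubfield lam) : σ f = f := by
  refine RingHom.eqOn_field_closure (f := (σ : K F n →+* K F n)) (g := RingHom.id _) ?_ hf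
  rintro _ (⟨c, rfl⟩ | ⟨b, hb, rfl⟩)
  · exact σ.commutes c
  · change σ _ = _
    rw [map_laurentMonomial hσ, show lambdaPow lam b = 1 from hb, map_one, one_mul]
    rfl

theorem setOf_fixed_eq_expLatticeSubfield
    (hσ : ∀ i, σ (α i) = algebraMap F (K F n) (lam i) * α i) :
    {f | σ f = f} = (expLatticeSubfield lam : Set (K F n)) :=
  Set.ext fun _ => ⟨mem_expLatticeSubfield_of_fixed hσ, fixed_of_mem_expLatticeSubfield hσ⟩

end ConstantField

theorem stmt_3_general {F : Type*} [Field F]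
    {n : ℕ}
    (lam : Fin n → F)
    (σ : K F n ≃ₐ[F] K F n)
    (hσ : ∀ i, σ (α i) = algebraMap F (K F n) (lam i) * α i)
    (r : ℕ) (a : Fin r → Fin n → ℤ)
    (hbasis : ∀ i : Fin n → ℤ,
      (∏ t, lam t ^ i t) = 1 ↔ ∃ s : Fin r → ℤ, i = ∑ j, s j • a j) :
    {f : K F n | σ f = f} =
      (Subfield.closure (Set.range (algebraMap F (K F n)) ∪
        Set.range (fun j : Fin r => laurentMonomial (F := F) (a j))) : Set (K F n)) := by
  rw [setOf_fixed_eq_expLatticeSubfield hσ, expLatticeSubfield,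
    closure_image_laurentMonomial_eq (U := {b | lambdaPow lam b = 1}) hbasis]

/-- Let `σ` be the `F`-algebra automorphism of `K = F(α₁,…,αₙ)` with
`σ(αᵢ) = λᵢ αᵢ` (all `λᵢ ∈ F` nonzero). Suppose `r ≥ 1` and `a₁,…,a_r ∈ ℤⁿ` form a ℤ-basis
of the exponent lattice `U_λ = {i ∈ ℤⁿ | λ^i = 1}`, i.e. `U_λ = ℤa₁ ⊕ ⋯ ⊕ ℤa_r`
(every element of `U_λ` is a ℤ-linear combination of the `aⱼ`, conversely each such
combination lies in `U_λ`, and the `aⱼ` are ℤ-linearly independent). Then the constant field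
`{f ∈ K | σ(f) = f}` equals the subfield `F(α^{a₁},…,α^{a_r})` of `K` generated by `F`
together with the Laurent monomials `α^{a₁},…,α^{a_r}`. -/
theorem stmt_3 {F : Type*} [Field F] [Algebra F (AlgebraicClosure ℚ)]
    {n : ℕ} (hn : 1 ≤ n)
    (lam : Fin n → F) (hlam : ∀ i, lam i ≠ 0)
    (σ : K F n ≃ₐ[F] K F n)
    (hσ : ∀ i, σ (α i) = algebraMap F (K F n) (lam i) * α i)
    (r : ℕ) (hr : 1 ≤ r) (a : Fin r → Fin n → ℤ)
    (hbasis : ∀ i : Fin n → ℤ,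
      (∏ t, lam t ^ i t) = 1 ↔ ∃ s : Fin r → ℤ, i = ∑ j, s j • a j)
    (hindep : ∀ s : Fin r → ℤ, (∑ j, s j • a j) = 0 → s = 0) :
    {f : K F n | σ f = f} =
      (Subfield.closure (Set.range (algebraMap F (K F n)) ∪
        Set.range (fun j : Fin r => laurentMonomial (F := F) (a j))) : Set (K F n)) :=
  stmt_3_general lam σ hσ r a hbasis
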